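/- arXiv:2310.17364 — 2 statements merged into one kernel-verified Lean document; each statement's English description precedes it below -/
import Mathlib

section
/- Let N, E ∈ ℕ, let A_p and A_high be diagonal N×N real matrices whose diagonal entries all lie in the open interval (0,1), with A_p ⪯ A_high in the Loewner order, and let B be an N×E real matrix. Then ‖((A_p - I)^2 + B*Bᵀ)⁻¹‖ ≤ ‖((A_high - I)^2 + B*Bᵀ)⁻¹‖, where ‖·‖ denotes the spectral norm (the ℓ2-induced operator norm) and both matrices (A_p - I)^2 + B*Bᵀ and (A_high - I)^2 + B*Bᵀ are positive definite, hence invertible. -/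
open Matrix
open scoped Matrix.Norms.L2Operator

/-!
The matrices `(A - I)² + B Bᵀ` are diagonal perturbations of the common positive semidefinite
matrix `B Bᵀ`. For diagonal `A_p ⪯ A_high` with entries below `1`, the diagonal entries satisfy
`(A_high,ii - 1)² ≤ (A_p,ii - 1)²`, so the two matrices are Loewner ordered, the smaller one
being positive definite. Inversion reverses the Loewner order on positive definite matrices,
and the spectral norm, being the supremum of the Rayleigh quotient, is monotone on positive
semidefinite matrices.
-/

namespace ContinuousLinearMap

variable {𝕜 E : Type*} [RCLike 𝕜] [NormedAddCommGroup E] [InnerProductSpace 𝕜 E]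

theorem norm_le_norm_of_nonneg_of_le {T S : E →L[𝕜] E} (hT : 0 ≤ T) (hTS : T ≤ S) :
    ‖T‖ ≤ ‖S‖ := by
  rw [nonneg_iff_isPositive] at hT
  rw [le_def] at hTS
  rw [T.norm_eq_iSup_rayleighQuotient hT.isSymmetric]
  refine ciSup_le fun x => le_trans ?_ (S.rayleighQuotient_le_norm x)
  have hT0 : 0 ≤ T.rayleighQuotient x := div_nonneg (hT.2 x) (by positivity)
  have hST : 0 ≤ (S - T).rayleighQuotient x := div_nonneg (hTS.2 x) (by positivity)
  rw [← sub_add_cancel S T, rayleighQuotient_add, abs_of_nonneg hT0,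
    abs_of_nonneg (add_nonneg hST hT0)]
  exact le_add_of_nonneg_left hST

end ContinuousLinearMap

namespace Matrix

theorem PosDef.of_posSemidef_sub {n R : Type*} [Ring R] [PartialOrder R] [StarRing R]
    [AddLeftMono R] {X Y : Matrix n n R} (hY : Y.PosDef) (h : (X - Y).PosSemidef) :
    X.PosDef := by
  simpa using hY.add_posSemidef h

theorem diagonal_sub_one_sq {n R : Type*} [Fintype n] [DecidableEq n] [CommRing R]
    (d : n → R) : (diagonal d - 1) ^ 2 = diagonal fun i => (d i - 1) ^ 2 := by
  rw [← diagonal_one, diagonal_sub, diagonal_pow]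
  rfl

theorem PosDef.posSemidef_inv_sub_inv {n K : Type*} [Fintype n] [DecidableEq n] [Field K]
    [PartialOrder K] [StarRing K] [StarOrderedRing K] {X Y : Matrix n n K} (hY : Y.PosDef)
    (h : (X - Y).PosSemidef) : (Y⁻¹ - X⁻¹).PosSemidef := by
  have hX := hY.of_posSemidef_sub h
  have := hX.isUnit.invertible
  have := hY.isUnit.invertible
  have := hY.inv.isUnit.invertible
  -- `X - Y` and `Y⁻¹ - X⁻¹` are the two Schur complements of this block matrix.
  have hblocks : (fromBlocks X 1 1 Y⁻¹).PosSemidef := by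
    simpa using (PosDef.fromBlocks₂₂ X 1 hY.inv).mpr (by simpa [inv_inv_of_invertible] using h)
  simpa using (PosDef.fromBlocks₁₁ 1 Y⁻¹ hX).mp (by simpa using hblocks)

open scoped ComplexOrder in
theorem l2_opNorm_le_of_posSemidef_sub {n 𝕜 : Type*} [Fintype n] [DecidableEq n] [RCLike 𝕜]
    {X Y : Matrix n n 𝕜} (hX : X.PosSemidef) (h : (Y - X).PosSemidef) : ‖X‖ ≤ ‖Y‖ := by
  rw [← l2_opNorm_toEuclideanCLM, ← l2_opNorm_toEuclideanCLM]
  refine ContinuousLinearMap.norm_le_norm_of_nonneg_of_le ?_ ?_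
  · rw [ContinuousLinearMap.nonneg_iff_isPositive]
    exact isPositive_toEuclideanLin_iff.mpr hX
  · rw [ContinuousLinearMap.le_def, ← map_sub]
    exact isPositive_toEuclideanLin_iff.mpr h

end Matrix

theorem l2_gain_lower_bound_monotone_general (N E : ℕ)
    (Ap Ahigh : Matrix (Fin N) (Fin N) ℝ)
    (hdp : Ap.IsDiag) (hdh : Ahigh.IsDiag)
    (hAh : ∀ i, 0 < Ahigh i i ∧ Ahigh i i < 1)
    (hle : (Ahigh - Ap).PosSemidef)
    (B : Matrix (Fin N) (Fin E) ℝ) :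
    ((Ap - 1) ^ 2 + B * Bᵀ).PosDef ∧ ((Ahigh - 1) ^ 2 + B * Bᵀ).PosDef ∧
    IsUnit ((Ap - 1) ^ 2 + B * Bᵀ) ∧ IsUnit ((Ahigh - 1) ^ 2 + B * Bᵀ) ∧
    ‖((Ap - 1) ^ 2 + B * Bᵀ)⁻¹‖ ≤ ‖((Ahigh - 1) ^ 2 + B * Bᵀ)⁻¹‖ := by
  obtain ⟨a, rfl⟩ : ∃ a, Ap = diagonal a := ⟨_, hdp.diagonal_diag.symm⟩
  obtain ⟨b, rfl⟩ : ∃ b, Ahigh = diagonal b := ⟨_, hdh.diagonal_diag.symm⟩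
  rw [diagonal_sub, posSemidef_diagonal_iff] at hle
  have hab (i) : a i ≤ b i := sub_nonneg.mp (hle i)
  have hb (i) : b i < 1 := by simpa using (hAh i).2
  have hBBt : (B * Bᵀ).PosSemidef := by simpa using posSemidef_self_mul_conjTranspose B
  rw [diagonal_sub_one_sq, diagonal_sub_one_sq]
  have hMh : (diagonal (fun i => (b i - 1) ^ 2) + B * Bᵀ).PosDef :=
    (posDef_diagonal_iff.mpr fun i => by nlinarith [hb i]).add_posSemidef hBBt
  have hMle : ((diagonal (fun i => (a i - 1) ^ 2) + B * Bᵀ) -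
      (diagonal (fun i => (b i - 1) ^ 2) + B * Bᵀ)).PosSemidef := by
    rw [add_sub_add_right_eq_sub, diagonal_sub, posSemidef_diagonal_iff]
    intro i
    nlinarith [hab i, hb i]
  have hMp := hMh.of_posSemidef_sub hMle
  exact ⟨hMp, hMh, hMp.isUnit, hMh.isUnit,
    l2_opNorm_le_of_posSemidef_sub hMp.inv.posSemidef (hMh.posSemidef_inv_sub_inv hMle)⟩

/-- Lemma 2 of the paper: For diagonal matrices `A_p ⪯ A_high` with entries
in `(0,1)` and any `N×E` matrix `B`, both `(A_p - I)² + B Bᵀ` and `(A_high - I)² + B Bᵀ`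
are positive definite (hence invertible) and the spectral norms of their inverses satisfy
`‖((A_p - I)² + B Bᵀ)⁻¹‖ ≤ ‖((A_high - I)² + B Bᵀ)⁻¹‖`. -/
theorem l2_gain_lower_bound_monotone (N E : ℕ)
    (Ap Ahigh : Matrix (Fin N) (Fin N) ℝ)
    (hdp : Ap.IsDiag) (hdh : Ahigh.IsDiag)
    (hAp : ∀ i, 0 < Ap i i ∧ Ap i i < 1)
    (hAh : ∀ i, 0 < Ahigh i i ∧ Ahigh i i < 1)
    (hle : (Ahigh - Ap).PosSemidef)
    (B : Matrix (Fin N) (Fin E) ℝ) :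
    ((Ap - 1) ^ 2 + B * Bᵀ).PosDef ∧ ((Ahigh - 1) ^ 2 + B * Bᵀ).PosDef ∧
    IsUnit ((Ap - 1) ^ 2 + B * Bᵀ) ∧ IsUnit ((Ahigh - 1) ^ 2 + B * Bᵀ) ∧
    ‖((Ap - 1) ^ 2 + B * Bᵀ)⁻¹‖ ≤ ‖((Ahigh - 1) ^ 2 + B * Bᵀ)⁻¹‖ :=
  l2_gain_lower_bound_monotone_general N E Ap Ahigh hdp hdh hAh hle B
end

section
/- Let N, E ∈ ℕ, let A be a symmetric N×N real matrix, let B be an N×E real matrix, and let γ > 0 be real. Suppose (i) A - A^2 - B*Bᵀ is positive definite, and (ii) B*Bᵀ ⪰ γ^{-2}•I - (A - I)^2 in the Loewner order. Then (I - A) - γ^{-2}•I is positive definite, i.e. I - A ≻ γ^{-2}•I. -/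
open Matrix

/-- Lemma 3 of the paper: For a symmetric `A`, an `N×E` matrix `B` and `γ > 0`,
if `A - A² - B Bᵀ ≻ 0` and `B Bᵀ ⪰ γ⁻²•I - (A - I)²`, then `I - A ≻ γ⁻²•I`. -/
theorem gain_condition_from_connectivity (N E : ℕ)
    (A : Matrix (Fin N) (Fin N) ℝ) (hA : A.IsSymm)
    (B : Matrix (Fin N) (Fin E) ℝ) (γ : ℝ) (hγ : 0 < γ)
    (hconn : (A - A ^ 2 - B * Bᵀ).PosDef)
    (hlb : (B * Bᵀ - ((γ ^ 2)⁻¹ • (1 : Matrix (Fin N) (Fin N) ℝ) - (A - 1) ^ 2)).PosSemidef) :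
    ((1 - A) - (γ ^ 2)⁻¹ • (1 : Matrix (Fin N) (Fin N) ℝ)).PosDef := by
  have key : ((1 - A) - (γ ^ 2)⁻¹ • (1 : Matrix (Fin N) (Fin N) ℝ)) =
      (A - A ^ 2 - B * Bᵀ) +
        (B * Bᵀ - ((γ ^ 2)⁻¹ • (1 : Matrix (Fin N) (Fin N) ℝ) - (A - 1) ^ 2)) := by
    have h2 : (A - 1) ^ 2 = A ^ 2 - 2 • A + 1 := by noncomm_ring
    rw [h2]; abel
  rw [key]
  exact hconn.add_posSemidef hlb
end
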